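/- arXiv:2304.07033 — 4 statements merged into one kernel-verified Lean document; each statement's English description precedes it below -/
import Mathlib

section
/- For every finite-state walk on ℤ² there exist a finite set R ⊆ ℤ × ℤ and a vector d ∈ ℤ × ℤ such that every visited cell lies in the half-band HB(R, d), i.e. for every n ∈ ℕ there are k ∈ ℕ and r ∈ R with x n = r + k • d. (The exploration power of one ant is at most a half-band.) -/
/-!
By pigeonhole the state sequence repeats, so from some time `m` on it is periodic with some
period `p > 0`. The displacement accumulated over one period is then a fixed vector `d`, hence
`x (i + k * p) = x i + k • d` for `i ≥ m`, and every visited cell is one of the first `m + p`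
cells translated by a multiple of `d`.
-/

open Pointwise

/-- The five allowed moves of an agent on the integer lattice:
stay put, east, west, north, south. -/
def Moves : Set (ℤ × ℤ) := {(0, 0), (1, 0), (-1, 0), (0, 1), (0, -1)}

/-- The half-band generated by a set `R` of cells and a drift vector `d`. -/
def HB (R : Set (ℤ × ℤ)) (d : ℤ × ℤ) : Set (ℤ × ℤ) :=
  ⋃ k : ℕ, (k • d) +ᵥ R

theorem exists_eventually_periodic_of_succ_eq {α : Type*} [Finite α] {f : α → α} {s : ℕ → α}
    (hs : ∀ n, s (n + 1) = f (s n)) :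
    ∃ m p, 0 < p ∧ ∀ n, m ≤ n → s (n + p) = s n := by
  obtain ⟨a, b, hab, hsab⟩ := Finite.exists_ne_map_eq_of_infinite s
  wlog hlt : a < b generalizing a b
  · exact this b a hab.symm hsab.symm (by omega)
  refine ⟨a, b - a, by omega, fun n hn => ?_⟩
  induction n, hn using Nat.le_induction with
  | base => rw [Nat.add_sub_cancel' hlt.le, hsab]
  | succ n _ ih => rw [Nat.add_right_comm, hs, ih, hs]

section PeriodicIncrements

variable {G : Type*} {x : ℕ → G} {m p : ℕ}

theorem eventually_add_period_of_succ_eq_add [AddCommGroup G] {α : Type*} {s : ℕ → α}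
    {g : α → G} (hx : ∀ n, x (n + 1) = x n + g (s n))
    (hper : ∀ n, m ≤ n → s (n + p) = s n) :
    ∀ n, m ≤ n → x (n + p) = x n + (x (m + p) - x m) := by
  intro n hn
  induction n, hn using Nat.le_induction with
  | base => abel
  | succ n hn ih => rw [Nat.add_right_comm, hx, ih, hper n hn, hx]; abel

theorem add_mul_period_eq_add_nsmul [AddMonoid G] {d : G}
    (hper : ∀ n, m ≤ n → x (n + p) = x n + d) {n : ℕ} (hn : m ≤ n) (k : ℕ) :
    x (n + k * p) = x n + k • d := by
  induction k with
  | zero => simp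
  | succ k ih =>
    rw [Nat.succ_mul, ← add_assoc, hper _ (by omega), ih, succ_nsmul, add_assoc]

theorem exists_lt_eq_add_nsmul [AddMonoid G] {d : G} (hp : 0 < p)
    (hper : ∀ n, m ≤ n → x (n + p) = x n + d) (n : ℕ) :
    ∃ i < m + p, ∃ k : ℕ, x n = x i + k • d := by
  by_cases hn : n < m
  · exact ⟨n, by omega, 0, by simp⟩
  have hsplit : m + (n - m) % p + (n - m) / p * p = n := by
    have := Nat.mod_add_div' (n - m) p
    omega
  refine ⟨m + (n - m) % p, by have := Nat.mod_lt (n - m) hp; omega, (n - m) / p, ?_⟩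
  rw [← add_mul_period_eq_add_nsmul hper (Nat.le_add_right m _), hsplit]

end PeriodicIncrements

theorem walk_subset_halfBand_general {Q : Type} [Fintype Q]
    (δ : Q → Q × (ℤ × ℤ))
    (s : ℕ → Q) (x : ℕ → ℤ × ℤ)
    (hs : ∀ n, s (n + 1) = (δ (s n)).1)
    (hx : ∀ n, x (n + 1) = x n + (δ (s n)).2) :
    ∃ (R : Set (ℤ × ℤ)) (d : ℤ × ℤ), R.Finite ∧
      ∀ n : ℕ, ∃ (k : ℕ) (r : ℤ × ℤ), r ∈ R ∧ x n = r + k • d := by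
  obtain ⟨m, p, hp, hsper⟩ := exists_eventually_periodic_of_succ_eq (f := fun q => (δ q).1) hs
  have hxper := eventually_add_period_of_succ_eq_add (g := fun q => (δ q).2) hx hsper
  refine ⟨x '' Set.Iio (m + p), x (m + p) - x m, (Set.finite_Iio _).image x, fun n => ?_⟩
  obtain ⟨i, hi, k, hxn⟩ := exists_lt_eq_add_nsmul hp hxper n
  exact ⟨k, x i, ⟨i, hi, rfl⟩, hxn⟩

/-- The exploration power of one ant is at most a half-band: every cell visited
by a finite-state walk lies in a half-band `HB R d` with `R` finite. -/
theorem walk_subset_halfBand {Q : Type} [Fintype Q] [Nonempty Q]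
    (δ : Q → Q × (ℤ × ℤ)) (hδ : ∀ q, (δ q).2 ∈ Moves)
    (q₀ : Q) (o : ℤ × ℤ)
    (s : ℕ → Q) (x : ℕ → ℤ × ℤ)
    (hs0 : s 0 = q₀) (hs : ∀ n, s (n + 1) = (δ (s n)).1)
    (hx0 : x 0 = o) (hx : ∀ n, x (n + 1) = x n + (δ (s n)).2) :
    ∃ (R : Set (ℤ × ℤ)) (d : ℤ × ℤ), R.Finite ∧
      ∀ n : ℕ, ∃ (k : ℕ) (r : ℤ × ℤ), r ∈ R ∧ x n = r + k • d :=
  walk_subset_halfBand_general δ s x hs hx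
end

section
/- For every finite-state walk on ℤ² there exist a vector d ∈ ℤ × ℤ and a constant C ≥ 0 such that for every n ∈ ℕ there is a real t ≥ 0 with ‖(x n : ℝ × ℝ) − (x 0 : ℝ × ℝ) − t • (d : ℝ × ℝ)‖ ≤ C. (A lone agent's trajectory stays within a bounded distance of a fixed ray from its start cell, i.e. within a band of bounded width.) -/
/-- Coercion of an integer lattice point into the real plane. -/
def toR (z : ℤ × ℤ) : ℝ × ℝ := ((z.1 : ℝ), (z.2 : ℝ))

/-!
The states live in a finite set, so they repeat, `s i = s (i + p)` with `p > 0`, and from then on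
the walk is periodic: each further period adds the same displacement `D = x (i + p) - x i`.
Hence every position is `x m + k • D` with `m < i + p`, so the walk stays within
`∑_{m < i + p} ‖x m - x 0‖` of the ray from `x 0` in direction `D`.
-/
lemma toR_add (a b : ℤ × ℤ) : toR (a + b) = toR a + toR b := by
  simp [toR]

lemma toR_nsmul (k : ℕ) (a : ℤ × ℤ) : toR (k • a) = (k : ℝ) • toR a := by
  simp [toR]

section Periodic

variable {Q G : Type*} [AddCommGroup G] {g : Q → Q} {v : Q → G} {s : ℕ → Q} {x : ℕ → G}
  {i p : ℕ}

lemma apply_add_eq_of_apply_add_eq (hs : ∀ n, s (n + 1) = g (s n)) (h : s (i + p) = s i)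
    {n : ℕ} (hn : i ≤ n) : s (n + p) = s n := by
  induction n, hn using Nat.le_induction with
  | base => exact h
  | succ n _ ih => rw [Nat.add_right_comm, hs, ih, hs]

lemma apply_add_eq_add_of_apply_add_eq (hs : ∀ n, s (n + 1) = g (s n))
    (hx : ∀ n, x (n + 1) = x n + v (s n)) (h : s (i + p) = s i) {n : ℕ} (hn : i ≤ n) :
    x (n + p) = x n + (x (i + p) - x i) := by
  induction n, hn using Nat.le_induction with
  | base => abel
  | succ n hin ih =>
    rw [Nat.add_right_comm, hx, hx, apply_add_eq_of_apply_add_eq hs h hin, ih]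
    abel

end Periodic

lemma exists_eq_add_nsmul_of_eventually_add_eq {G : Type*} [AddMonoid G] {x : ℕ → G} {N p : ℕ}
    {D : G} (hp : 0 < p) (h : ∀ n, N ≤ n → x (n + p) = x n + D) (n : ℕ) :
    ∃ m < N + p, ∃ k : ℕ, x n = x m + k • D := by
  induction n using Nat.strong_induction_on with
  | _ n ih =>
    by_cases hn : n < N + p
    · exact ⟨n, hn, 0, by simp⟩
    · obtain ⟨m, hm, k, hk⟩ := ih (n - p) (by omega)
      refine ⟨m, hm, k + 1, ?_⟩
      rw [← Nat.sub_add_cancel (show p ≤ n by omega), h _ (by omega), hk, succ_nsmul, add_assoc]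

theorem walk_near_ray_general {Q : Type} [Fintype Q]
    (δ : Q → Q × (ℤ × ℤ))
    (s : ℕ → Q) (x : ℕ → ℤ × ℤ)
    (hs : ∀ n, s (n + 1) = (δ (s n)).1)
    (hx : ∀ n, x (n + 1) = x n + (δ (s n)).2) :
    ∃ (d : ℤ × ℤ) (C : ℝ), 0 ≤ C ∧
      ∀ n : ℕ, ∃ t : ℝ, 0 ≤ t ∧ ‖toR (x n) - toR (x 0) - t • toR d‖ ≤ C := by
  obtain ⟨i, j, hij, hsij⟩ :=
    Set.finite_univ.exists_lt_map_eq_of_forall_mem (f := s) fun n => Set.mem_univ (s n)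
  obtain ⟨p, rfl⟩ := Nat.exists_eq_add_of_le hij.le
  have hdisp (n : ℕ) (hn : i ≤ n) : x (n + p) = x n + (x (i + p) - x i) :=
    apply_add_eq_add_of_apply_add_eq (g := fun q => (δ q).1) (v := fun q => (δ q).2)
      hs hx hsij.symm hn
  set f : ℕ → ℝ := fun m => ‖toR (x m) - toR (x 0)‖
  refine ⟨x (i + p) - x i, ∑ m ∈ Finset.range (i + p), f m, by positivity, fun n => ?_⟩
  obtain ⟨m, hm, k, hxn⟩ := exists_eq_add_nsmul_of_eventually_add_eq (by omega) hdisp n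
  refine ⟨k, k.cast_nonneg, ?_⟩
  calc ‖toR (x n) - toR (x 0) - (k : ℝ) • toR (x (i + p) - x i)‖ = f m := by
        rw [hxn, toR_add, toR_nsmul, add_sub_right_comm, add_sub_cancel_right]
    _ ≤ ∑ m ∈ Finset.range (i + p), f m :=
        Finset.single_le_sum (f := f) (fun _ _ => norm_nonneg _) (Finset.mem_range.2 hm)

/-- A lone agent's trajectory stays within a bounded distance of a fixed ray
from its start cell. -/
theorem walk_near_ray {Q : Type} [Fintype Q] [Nonempty Q]
    (δ : Q → Q × (ℤ × ℤ)) (hδ : ∀ q, (δ q).2 ∈ Moves)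
    (q₀ : Q) (o : ℤ × ℤ)
    (s : ℕ → Q) (x : ℕ → ℤ × ℤ)
    (hs0 : s 0 = q₀) (hs : ∀ n, s (n + 1) = (δ (s n)).1)
    (hx0 : x 0 = o) (hx : ∀ n, x (n + 1) = x n + (δ (s n)).2) :
    ∃ (d : ℤ × ℤ) (C : ℝ), 0 ≤ C ∧
      ∀ n : ℕ, ∃ t : ℝ, 0 ≤ t ∧ ‖toR (x n) - toR (x 0) - t • toR d‖ ≤ C :=
  walk_near_ray_general δ s x hs hx
end

section
/- For every m ∈ ℕ, every family of finite sets R i ⊆ ℤ × ℤ and vectors d i ∈ ℤ × ℤ indexed by i ∈ Fin m, the complement in ℤ × ℤ of the union ⋃_{i} HB(R i, d i) is infinite. (Finitely many half-bands, in particular the three independent half-bands explored by three non-communicating agents, never cover the integer lattice.) -/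
/-!
For `M` larger than every `|(d i).2|`, the lattice line `n ↦ (n, n * M)` is parallel to no
nonzero drift `d i`, so it meets each line `r + ℤ • d i`, hence each half-band, in finitely many
points. The line therefore has infinitely many points outside all the half-bands.
-/

open Pointwise

lemma mem_HB_iff {R : Set (ℤ × ℤ)} {d p : ℤ × ℤ} :
    p ∈ HB R d ↔ ∃ k : ℕ, ∃ r ∈ R, p = (k : ℤ) • d + r := by
  simp only [HB, Set.mem_iUnion, Set.mem_vadd_set, vadd_eq_add, natCast_zsmul, eq_comm]

lemma eq_zero_of_mul_fst_eq_snd {d : ℤ × ℤ} {M : ℤ} (hM : (d.2.natAbs : ℤ) < M)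
    (h : M * d.1 = d.2) : d.1 = 0 := by
  by_contra hd
  have : M ≤ |M * d.1| := by
    rw [abs_mul, abs_of_pos (by omega)]
    exact le_mul_of_one_le_right (by omega) (Int.one_le_abs hd)
  rw [h, Int.abs_eq_natAbs] at this
  omega

lemma subsingleton_line_inter_line {r d : ℤ × ℤ} {M : ℤ} (hd : M * d.1 = d.2 → d.1 = 0) :
    {n : ℤ | ∃ k : ℤ, (n, n * M) = k • d + r}.Subsingleton := by
  rintro a ⟨k, hk⟩ b ⟨l, hl⟩
  simp only [Prod.ext_iff, Prod.fst_add, Prod.snd_add, Prod.smul_fst, Prod.smul_snd,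
    smul_eq_mul] at hk hl
  have hfst : a - b = (k - l) * d.1 := by linear_combination hk.1 - hl.1
  have hsnd : (a - b) * M = (k - l) * d.2 := by linear_combination hk.2 - hl.2
  have hcross : (a - b) * (M * d.1 - d.2) = 0 := by linear_combination d.1 * hsnd - d.2 * hfst
  rcases mul_eq_zero.mp hcross with hab | hpar
  · omega
  · rw [hd (by omega), mul_zero] at hfst
    omega

lemma finite_preimage_line_HB {R : Set (ℤ × ℤ)} (hR : R.Finite) {d : ℤ × ℤ} {M : ℤ}
    (hd : M * d.1 = d.2 → d.1 = 0) :
    ((fun n : ℤ => (n, n * M)) ⁻¹' HB R d).Finite := by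
  refine (hR.biUnion fun r _ => (subsingleton_line_inter_line (r := r) hd).finite).subset ?_
  intro n hn
  obtain ⟨k, r, hr, hkr⟩ := mem_HB_iff.mp hn
  exact Set.mem_biUnion hr ⟨k, hkr⟩

/-- Finitely many half-bands never cover the integer lattice: the complement of
their union is infinite. -/
theorem finitely_many_halfBands_complement_infinite (m : ℕ)
    (R : Fin m → Set (ℤ × ℤ)) (hR : ∀ i, (R i).Finite) (d : Fin m → ℤ × ℤ) :
    (⋃ i : Fin m, HB (R i) (d i))ᶜ.Infinite := by
  set M : ℤ := ((Finset.univ.sup fun i => (d i).2.natAbs : ℕ) : ℤ) + 1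
  have hM : ∀ i, ((d i).2.natAbs : ℤ) < M := fun i => by
    have := Finset.le_sup (f := fun i => (d i).2.natAbs) (Finset.mem_univ i)
    omega
  set line : ℤ → ℤ × ℤ := fun n => (n, n * M)
  have hline : Function.Injective line := fun a b h => congrArg Prod.fst h
  have hfin : (line ⁻¹' ⋃ i, HB (R i) (d i)).Finite := by
    rw [Set.preimage_iUnion]
    exact Set.finite_iUnion fun i =>
      finite_preimage_line_HB (hR i) (eq_zero_of_mul_fst_eq_snd (hM i))
  have hinf : (line ⁻¹' (⋃ i, HB (R i) (d i))ᶜ).Infinite := hfin.infinite_compl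
  exact (hinf.image hline.injOn).mono (Set.image_preimage_subset line _)
end

section
/- There exists a unit-step lattice path x : ℕ → ℤ × ℤ with x 0 = (0, 0) and x (n+1) − x n ∈ {(1,0),(−1,0),(0,1),(0,−1)} for all n, whose range is exactly the wedge {(a, b) ∈ ℤ × ℤ : 0 ≤ b ∧ −b ≤ a ∧ a ≤ b}. (The explorer's trajectory in the wedge construction: bouncing left and right between the two diagonals, it visits precisely the cells of the wedge.) -/
/-!
The explorer climbs the wedge row by row. Row `b` is entered from the end of row `b - 1` by a
north step onto the cell `(±(b - 1), b)`, one step away from a diagonal; the explorer steps out to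
that diagonal and then sweeps across to the opposite one, where it turns north again. Since the
sweep direction alternates with the parity of `b`, each row exits on the diagonal next to which
the following row is entered.

Concretely, times `n` with `b (b + 1) ≤ n + 1 < (b + 1) (b + 2)` belong to row `b`, and at offset
`k = n - b (b + 1) ∈ [-1, 2b]` the explorer is at `((-1)ᵇ (|k| - b), b)`.
-/

/-- The four unit moves on the integer lattice: east, west, north, south. -/
def UnitMoves : Set (ℤ × ℤ) := {(1, 0), (-1, 0), (0, 1), (0, -1)}

def wedge : Set (ℤ × ℤ) := {z | 0 ≤ z.2 ∧ -z.2 ≤ z.1 ∧ z.1 ≤ z.2}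

def wedgeRow (n : ℕ) : ℕ := (Nat.sqrt (4 * n + 5) - 1) / 2

theorem wedgeRow_eq_iff {n b : ℕ} :
    wedgeRow n = b ↔ b * (b + 1) ≤ n + 1 ∧ n + 1 < (b + 1) * (b + 2) := by
  have hsqrt : b * (b + 1) ≤ n + 1 ∧ n + 1 < (b + 1) * (b + 2) ↔
      2 * b + 1 ≤ Nat.sqrt (4 * n + 5) ∧ Nat.sqrt (4 * n + 5) < 2 * b + 3 := by
    rw [Nat.le_sqrt, Nat.sqrt_lt]
    constructor <;> rintro ⟨h₁, h₂⟩ <;> constructor <;> nlinarith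
  have : 2 ≤ Nat.sqrt (4 * n + 5) := Nat.le_sqrt.2 (by omega)
  rw [hsqrt, wedgeRow]
  omega

theorem wedgeRow_spec (n : ℕ) :
    wedgeRow n * (wedgeRow n + 1) ≤ n + 1 ∧ n + 1 < (wedgeRow n + 1) * (wedgeRow n + 2) :=
  wedgeRow_eq_iff.1 rfl

def wedgeCell (b : ℕ) (k : ℤ) : ℤ × ℤ := ((-1) ^ b * (|k| - b), b)

def wedgePath (n : ℕ) : ℤ × ℤ :=
  wedgeCell (wedgeRow n) (n - wedgeRow n * (wedgeRow n + 1))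

theorem wedgeCell_succ_sub_mem (b : ℕ) {k : ℤ} (hk : -1 ≤ k) :
    wedgeCell b (k + 1) - wedgeCell b k ∈ UnitMoves := by
  have hstep : |k + 1| - |k| = 1 ∨ |k + 1| - |k| = -1 := by
    rcases hk.eq_or_lt with rfl | hk
    · norm_num
    · rw [abs_of_nonneg (by omega), abs_of_nonneg (by omega)]
      simp
  rcases neg_one_pow_eq_or ℤ b with h | h <;>
    simp [wedgeCell, UnitMoves, h] <;> omega

theorem wedgeCell_succ_row_sub (b : ℕ) :
    wedgeCell (b + 1) (-1) - wedgeCell b (2 * b) = (0, 1) := by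
  simp [wedgeCell, pow_succ, abs_of_nonneg]
  ring

theorem wedgeCell_mem_wedge_iff {b : ℕ} {k : ℤ} : wedgeCell b k ∈ wedge ↔ |k| ≤ 2 * b := by
  rcases neg_one_pow_eq_or ℤ b with h | h <;>
    simp [wedgeCell, wedge, h] <;> omega

theorem wedgeCell_add_neg_one_pow_mul {b : ℕ} {a : ℤ} (h₁ : -b ≤ a) (h₂ : a ≤ b) :
    wedgeCell b (b + (-1) ^ b * a) = (a, (b : ℤ)) := by
  rcases neg_one_pow_eq_or ℤ b with h | h <;>
    rw [wedgeCell, h, abs_of_nonneg (by omega)] <;> ext <;> simp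

theorem wedgePath_eq {n b : ℕ} (h₁ : b * (b + 1) ≤ n + 1) (h₂ : n + 1 < (b + 1) * (b + 2)) :
    wedgePath n = wedgeCell b (n - b * (b + 1)) := by
  rw [wedgePath, wedgeRow_eq_iff.2 ⟨h₁, h₂⟩]

theorem wedgePath_zero : wedgePath 0 = (0, 0) := by
  rw [wedgePath_eq (b := 0) (by norm_num) (by norm_num)]
  simp [wedgeCell]

theorem wedgePath_succ_sub_mem (n : ℕ) : wedgePath (n + 1) - wedgePath n ∈ UnitMoves := by
  obtain ⟨h₁, h₂⟩ := wedgeRow_spec n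
  set b := wedgeRow n
  rw [wedgePath_eq h₁ h₂]
  rcases (Nat.succ_le_of_lt h₂).lt_or_eq with hrow | hnext
  · rw [wedgePath_eq (by omega) hrow, Nat.cast_succ, add_sub_right_comm]
    exact wedgeCell_succ_sub_mem b (by zify at h₁; linarith)
  · rw [wedgePath_eq (b := b + 1) hnext.ge (by nlinarith)]
    zify at hnext
    have hlast : (n : ℤ) - b * (b + 1) = 2 * b := by linear_combination hnext
    have hfirst : ((n + 1 : ℕ) : ℤ) - (b + 1 : ℕ) * ((b + 1 : ℕ) + 1) = -1 := by
      push_cast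
      linear_combination hnext
    rw [hfirst, hlast, wedgeCell_succ_row_sub]
    simp [UnitMoves]

theorem range_wedgePath : Set.range wedgePath = wedge := by
  ext ⟨a, c⟩
  constructor
  · rintro ⟨n, hn⟩
    obtain ⟨h₁, h₂⟩ := wedgeRow_spec n
    rw [← hn, wedgePath, wedgeCell_mem_wedge_iff, abs_le]
    set b := wedgeRow n
    zify at h₁ h₂
    rcases Nat.eq_zero_or_pos b with hb | hb
    · simp only [hb, CharP.cast_eq_zero] at h₂ ⊢
      omega
    · constructor <;> nlinarith
  · rintro ⟨hc, ha₁, ha₂⟩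
    lift c to ℕ using hc
    have hoffset : 0 ≤ (c : ℤ) + (-1) ^ c * a ∧ (c : ℤ) + (-1) ^ c * a ≤ 2 * c := by
      rcases neg_one_pow_eq_or ℤ c with h | h <;> rw [h] <;> omega
    obtain ⟨k, hk⟩ := Int.eq_ofNat_of_zero_le hoffset.1
    refine ⟨c * (c + 1) + k, ?_⟩
    rw [wedgePath_eq (b := c) (by omega) (by nlinarith)]
    push_cast
    rw [add_sub_cancel_left, ← hk, wedgeCell_add_neg_one_pow_mul ha₁ ha₂]

/-- The explorer's trajectory in the wedge construction: there is a unit-step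
lattice path starting at the origin whose range is exactly the wedge
`{(a, b) : 0 ≤ b, −b ≤ a ≤ b}`. -/
theorem wedge_exploration :
    ∃ x : ℕ → ℤ × ℤ, x 0 = (0, 0) ∧
      (∀ n : ℕ, x (n + 1) - x n ∈ UnitMoves) ∧
      Set.range x = {z : ℤ × ℤ | 0 ≤ z.2 ∧ -z.2 ≤ z.1 ∧ z.1 ≤ z.2} :=
  ⟨wedgePath, wedgePath_zero, wedgePath_succ_sub_mem, range_wedgePath⟩
end
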